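/- arXiv:1710.10664 — 12 statements merged into one kernel-verified Lean document; each statement's English description precedes it below -/
import Mathlib

section
/- Let p and q be coprime integers with 1 < p < q. Then Δ_{p,q}(X) = ∏ Φ_{hℓ}(X), where the product is over all divisors h of p and ℓ of q with h ≠ 1 and ℓ ≠ 1, and Φ_n denotes the n-th cyclotomic polynomial over ℤ. -/
open Polynomial

lemma key_prod (p q : ℕ) (hp : 0 < p) (hq : 0 < q) (hcop : Nat.Coprime p q) :
    ∏ h ∈ p.divisors, ∏ l ∈ q.divisors, cyclotomic (h * l) ℤ = X ^ (p * q) - 1 := by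
  rw [← Polynomial.prod_cyclotomic_eq_X_pow_sub_one (Nat.mul_pos hp hq), ← Finset.prod_product']
  refine Finset.prod_bij (fun a _ => a.1 * a.2) ?_ ?_ ?_ ?_
  · rintro ⟨h, l⟩ hm
    simp only [Finset.mem_product, Nat.mem_divisors] at hm ⊢
    exact ⟨mul_dvd_mul hm.1.1 hm.2.1, (Nat.mul_pos hp hq).ne'⟩
  · rintro ⟨h, l⟩ hm ⟨h', l'⟩ hm' heq
    have heq' : h * l = h' * l' := heq
    simp only [Finset.mem_product, Nat.mem_divisors] at hm hm'
    have hhl : h = h' := by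
      have c1 : Nat.Coprime h' l := (hcop.coprime_dvd_left hm'.1.1).coprime_dvd_right hm.2.1
      have c2 : Nat.Coprime h l' := (hcop.coprime_dvd_left hm.1.1).coprime_dvd_right hm'.2.1
      refine Nat.dvd_antisymm (c2.dvd_of_dvd_mul_right ?_) (c1.dvd_of_dvd_mul_right ?_)
      · exact heq' ▸ Dvd.intro l rfl
      · exact heq'.symm ▸ Dvd.intro l' rfl
    have hpos : 0 < h := Nat.pos_of_dvd_of_pos hm.1.1 hp
    subst hhl
    have : l = l' := Nat.eq_of_mul_eq_mul_left hpos heq'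
    simp [this]
  · intro d hd
    simp only [Nat.mem_divisors] at hd
    obtain ⟨h, l, hh, hl, rfl⟩ := exists_dvd_and_dvd_of_dvd_mul hd.1
    exact ⟨⟨h, l⟩, by simp [Finset.mem_product, Nat.mem_divisors, hh, hl, hp.ne', hq.ne'], rfl⟩
  · intros; rfl

theorem torus_knot_alexander_cyclotomic_product (p q : ℕ) (hp : 1 < p) (hpq : p < q)
    (hcop : Nat.Coprime p q) (Δ : ℤ[X])
    (hΔ : Δ * ((X ^ p - 1) * (X ^ q - 1)) = (X ^ (p * q) - 1) * (X - 1)) :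
    Δ = ∏ h ∈ p.divisors.erase 1, ∏ l ∈ q.divisors.erase 1, cyclotomic (h * l) ℤ := by
  have hp0 : 0 < p := lt_trans one_pos hp
  have hq0 : 0 < q := lt_trans hp0 hpq
  have h1p : 1 ∈ p.divisors := Nat.one_mem_divisors.mpr hp0.ne'
  have h1q : 1 ∈ q.divisors := Nat.one_mem_divisors.mpr hq0.ne'
  set R := ∏ h ∈ p.divisors.erase 1, ∏ l ∈ q.divisors.erase 1, cyclotomic (h * l) ℤ with hR
  have hne : (X ^ p - 1 : ℤ[X]) * (X ^ q - 1) ≠ 0 := by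
    have h1 := X_pow_sub_C_ne_zero hp0 (1 : ℤ)
    have h2 := X_pow_sub_C_ne_zero hq0 (1 : ℤ)
    rw [map_one] at h1 h2
    exact mul_ne_zero h1 h2
  apply mul_right_cancel₀ hne
  rw [hΔ]
  symm
  have hXp : (X ^ p - 1 : ℤ[X]) = ∏ h ∈ p.divisors, cyclotomic h ℤ :=
    (Polynomial.prod_cyclotomic_eq_X_pow_sub_one hp0 ℤ).symm
  have hsplit_q : (X ^ q - 1 : ℤ[X]) =
      (X - 1) * ∏ l ∈ q.divisors.erase 1, cyclotomic l ℤ := by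
    rw [← Polynomial.prod_cyclotomic_eq_X_pow_sub_one hq0 ℤ,
      ← Finset.mul_prod_erase _ _ h1q, cyclotomic_one]
  have step1 : (∏ l ∈ q.divisors.erase 1, cyclotomic l ℤ) * R =
      ∏ h ∈ p.divisors, ∏ l ∈ q.divisors.erase 1, cyclotomic (h * l) ℤ := by
    rw [← Finset.mul_prod_erase _ (fun h => ∏ l ∈ q.divisors.erase 1, cyclotomic (h * l) ℤ) h1p]
    congr 1
    exact Finset.prod_congr rfl fun l _ => by rw [one_mul]
  have step2 : (∏ h ∈ p.divisors, ∏ l ∈ q.divisors.erase 1, cyclotomic (h * l) ℤ) *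
      (∏ h ∈ p.divisors, cyclotomic h ℤ) =
      ∏ h ∈ p.divisors, ∏ l ∈ q.divisors, cyclotomic (h * l) ℤ := by
    rw [← Finset.prod_mul_distrib]
    refine Finset.prod_congr rfl fun h _ => ?_
    rw [← Finset.mul_prod_erase _ (fun l => cyclotomic (h * l) ℤ) h1q, mul_one, mul_comm]
  calc R * ((X ^ p - 1) * (X ^ q - 1))
      = (X - 1) * (((∏ l ∈ q.divisors.erase 1, cyclotomic l ℤ) * R) *
          (∏ h ∈ p.divisors, cyclotomic h ℤ)) := by rw [hXp, hsplit_q]; ring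
    _ = (X - 1) * ∏ h ∈ p.divisors, ∏ l ∈ q.divisors, cyclotomic (h * l) ℤ := by
        rw [step1, step2]
    _ = (X ^ (p * q) - 1) * (X - 1) := by rw [key_prod p q hp0 hq0 hcop]; ring
end

section
/- Let p and q be coprime integers with 1 < p < q. Then the constant coefficient of Δ_{p,q} is 1, and for every integer n ≥ 1 the coefficient of X^n in Δ_{p,q} equals χ(n) − χ(n−1), where χ(k) = 1 if k ∈ S_{p,q} and χ(k) = 0 otherwise; i.e. coefficientwise Δ_{p,q} is the indicator difference of the numerical semigroup S_{p,q}. -/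
open Polynomial

open scoped Classical

private lemma tk_L1 {p q n : ℕ} (h : ∃ k, k < p ∧ n = k * q) :
    ∃ a b : ℕ, n = a * p + b * q := by
  obtain ⟨k, _, rfl⟩ := h
  exact ⟨0, k, by ring⟩

private lemma tk_L2 {p q n : ℕ} (hp : 1 < p) (hpq : p < q) (hcop : Nat.Coprime p q)
    (h : ∃ k, k < p ∧ n = k * q) (hpn : p ≤ n) :
    ¬∃ a b : ℕ, n - p = a * p + b * q := by
  obtain ⟨k, hkp, rfl⟩ := h
  rintro ⟨a, b, hab⟩
  have h1 : k * q = a * p + b * q + p := by omega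
  have hbk : b * q ≤ k * q := by omega
  have hbk' : b ≤ k := Nat.le_of_mul_le_mul_right hbk (by omega)
  have h3 : a * p + p = (k - b) * q := by
    rw [Nat.sub_mul]; omega
  have hdvd : q ∣ (a + 1) * p := ⟨k - b, by rw [add_one_mul, h3, mul_comm]⟩
  have hq1 : q ≤ a + 1 := Nat.le_of_dvd (by omega)
    ((Nat.Coprime.symm hcop).dvd_of_dvd_mul_right hdvd)
  have h5 : q * p ≤ (a + 1) * p := Nat.mul_le_mul_right p hq1
  have h6 : (k + 1) * q ≤ p * q := Nat.mul_le_mul_right q hkp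
  rw [add_one_mul] at h5 h6
  have h7 : p * q = q * p := Nat.mul_comm p q
  omega

private lemma tk_L3 {p q n : ℕ} (hpn : p ≤ n) (h : ∃ a b : ℕ, n - p = a * p + b * q) :
    ∃ a b : ℕ, n = a * p + b * q := by
  obtain ⟨a, b, hab⟩ := h
  refine ⟨a + 1, b, ?_⟩
  rw [add_one_mul]
  omega

private lemma tk_L4 {p q n : ℕ} (hp : 1 < p) (hpq : p < q)
    (hn : ∃ a b : ℕ, n = a * p + b * q) (hk : ¬∃ k, k < p ∧ n = k * q) :
    p ≤ n ∧ ∃ a b : ℕ, n - p = a * p + b * q := by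
  obtain ⟨a, b, hab⟩ := hn
  rcases a with _ | a'
  · have hnb : n = b * q := by omega
    have hbp : p ≤ b := by
      by_contra hb
      exact hk ⟨b, by omega, hnb⟩
    obtain ⟨c, rfl⟩ := Nat.exists_eq_add_of_le hbp
    obtain ⟨d, rfl⟩ : ∃ d, q = d + 1 := ⟨q - 1, by omega⟩
    have key : (p + c) * (d + 1) = p + (d * p + c * (d + 1)) := by ring
    constructor
    · omega
    · exact ⟨d, c, by omega⟩
  · have key : (a' + 1) * p = a' * p + p := by ring
    constructor
    · omega
    · exact ⟨a', b, by omega⟩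

private lemma chi_step (p q : ℕ) (hp : 1 < p) (hpq : p < q) (hcop : Nat.Coprime p q) (n : ℕ) :
    (if ∃ a b : ℕ, n = a * p + b * q then (1:ℤ) else 0)
    = (if p ≤ n then (if ∃ a b : ℕ, n - p = a * p + b * q then (1:ℤ) else 0) else 0)
    + (if ∃ k, k < p ∧ n = k * q then 1 else 0) := by
  by_cases h4 : ∃ k, k < p ∧ n = k * q
  · have hc1 : ∃ a b : ℕ, n = a * p + b * q := tk_L1 h4
    rw [if_pos h4, if_pos hc1]
    by_cases h2 : p ≤ n
    · rw [if_pos h2, if_neg (tk_L2 hp hpq hcop h4 h2)]; ring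
    · rw [if_neg h2]; ring
  · rw [if_neg h4, add_zero]
    by_cases h1 : ∃ a b : ℕ, n = a * p + b * q
    · obtain ⟨h2, h3⟩ := tk_L4 hp hpq h1 h4
      rw [if_pos h1, if_pos h2, if_pos h3]
    · rw [if_neg h1]
      by_cases h2 : p ≤ n
      · rw [if_pos h2, if_neg (fun h3 => h1 (tk_L3 h2 h3))]
      · rw [if_neg h2]

open scoped Classical in
theorem torus_knot_alexander_semigroup_coeffs (p q : ℕ) (hp : 1 < p) (hpq : p < q)
    (hcop : Nat.Coprime p q) (Δ : ℤ[X])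
    (hΔ : Δ * ((X ^ p - 1) * (X ^ q - 1)) = (X ^ (p * q) - 1) * (X - 1)) :
    Δ.coeff 0 = 1 ∧
    ∀ n : ℕ, 1 ≤ n →
      Δ.coeff n =
        (if ∃ a b : ℕ, n = a * p + b * q then (1 : ℤ) else 0) -
        (if ∃ a b : ℕ, n - 1 = a * p + b * q then (1 : ℤ) else 0) := by
  set H : PowerSeries ℤ := PowerSeries.mk fun n => if ∃ a b : ℕ, n = a * p + b * q then 1 else 0 with hH
  have hsum : ∀ n : ℕ, (∑ k ∈ Finset.range p, if n = k * q then (1:ℤ) else 0)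
      = if ∃ k, k < p ∧ n = k * q then 1 else 0 := by
    intro n
    by_cases h : ∃ k, k < p ∧ n = k * q
    · obtain ⟨k, hkp, rfl⟩ := h
      rw [if_pos ⟨k, hkp, rfl⟩, Finset.sum_eq_single k]
      · simp
      · intro j hj hne
        rw [if_neg]
        intro e
        exact hne (Nat.eq_of_mul_eq_mul_right (by omega) e.symm)
      · intro h; exact absurd (Finset.mem_range.2 hkp) h
    · rw [if_neg h]
      apply Finset.sum_eq_zero
      intro k hk
      rw [if_neg fun e => h ⟨k, Finset.mem_range.1 hk, e⟩]
  have hG : H * (1 - (PowerSeries.X : PowerSeries ℤ) ^ p)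
      = ∑ k ∈ Finset.range p, (PowerSeries.X : PowerSeries ℤ) ^ (k * q) := by
    ext n
    rw [map_sum]
    simp only [PowerSeries.coeff_X_pow]
    rw [mul_sub, mul_one, map_sub, PowerSeries.coeff_mul_X_pow']
    simp only [hH, PowerSeries.coeff_mk]
    rw [hsum n]
    have := chi_step p q hp hpq hcop n
    split_ifs at this ⊢ <;> omega
  have hHC : H * ((1 - (PowerSeries.X : PowerSeries ℤ) ^ p) * (1 - PowerSeries.X ^ q))
      = 1 - PowerSeries.X ^ (p * q) := by
    rw [← mul_assoc, hG]
    have hrw : (∑ k ∈ Finset.range p, (PowerSeries.X : PowerSeries ℤ) ^ (k * q))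
        = ∑ k ∈ Finset.range p, ((PowerSeries.X : PowerSeries ℤ) ^ q) ^ k := by
      refine Finset.sum_congr rfl fun k _ => ?_
      rw [← pow_mul, mul_comm]
    rw [hrw]
    have hg := geom_sum_mul ((PowerSeries.X : PowerSeries ℤ) ^ q) p
    have h2 : (∑ k ∈ Finset.range p, ((PowerSeries.X : PowerSeries ℤ) ^ q) ^ k)
        * (1 - PowerSeries.X ^ q)
        = -(((PowerSeries.X : PowerSeries ℤ) ^ q) ^ p - 1) := by
      rw [← hg]; ring
    rw [h2, ← pow_mul, mul_comm q p]
    ring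
  have h2 : (Δ : PowerSeries ℤ) *
        (((PowerSeries.X : PowerSeries ℤ) ^ p - 1) * ((PowerSeries.X : PowerSeries ℤ) ^ q - 1))
      = ((PowerSeries.X : PowerSeries ℤ) ^ (p * q) - 1) * ((PowerSeries.X : PowerSeries ℤ) - 1) := by
    have := congrArg (fun r : ℤ[X] => (r : PowerSeries ℤ)) hΔ
    simpa only [Polynomial.coe_mul, Polynomial.coe_sub, Polynomial.coe_pow, Polynomial.coe_X,
      Polynomial.coe_one] using this
  have hCne : ((1 - (PowerSeries.X : PowerSeries ℤ) ^ p) * (1 - PowerSeries.X ^ q)) ≠ 0 := by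
    intro hzero
    have := congrArg (PowerSeries.constantCoeff) hzero
    simp [PowerSeries.constantCoeff_X, zero_pow (by omega : p ≠ 0),
      zero_pow (by omega : q ≠ 0)] at this
  have hkey : (Δ : PowerSeries ℤ) = H * (1 - PowerSeries.X) := by
    apply mul_right_cancel₀ hCne
    rw [mul_comm H (1 - PowerSeries.X), mul_assoc, hHC]
    calc (Δ : PowerSeries ℤ) * ((1 - (PowerSeries.X : PowerSeries ℤ) ^ p) * (1 - PowerSeries.X ^ q))
        = (Δ : PowerSeries ℤ) * (((PowerSeries.X : PowerSeries ℤ) ^ p - 1)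
            * ((PowerSeries.X : PowerSeries ℤ) ^ q - 1)) := by ring
      _ = ((PowerSeries.X : PowerSeries ℤ) ^ (p * q) - 1) * ((PowerSeries.X : PowerSeries ℤ) - 1) := h2
      _ = (1 - PowerSeries.X) * (1 - PowerSeries.X ^ (p * q)) := by ring
  have hcoeff : ∀ n : ℕ, Δ.coeff n = PowerSeries.coeff n (H * (1 - PowerSeries.X)) := by
    intro n
    rw [← hkey, Polynomial.coeff_coe]
  constructor
  · rw [hcoeff 0, mul_sub, mul_one, map_sub, PowerSeries.coeff_zero_mul_X]
    simp only [hH, PowerSeries.coeff_mk]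
    rw [if_pos ⟨0, 0, by ring⟩]
    ring
  · intro n hn
    rw [hcoeff n, mul_sub, mul_one, map_sub]
    obtain ⟨m, rfl⟩ : ∃ m, n = m + 1 := ⟨n - 1, by omega⟩
    rw [PowerSeries.coeff_succ_mul_X]
    simp only [hH, PowerSeries.coeff_mk, Nat.add_sub_cancel]
end

section
/- Let p and q be coprime integers with 1 < p < q. In the formal power series ring ℤ[[X]], the series (1 − X^p)(1 − X^q) is a unit (its constant term is 1), and the n-th coefficient of the power series (1 − X^{pq})·((1 − X^p)(1 − X^q))^{−1} equals 1 if n ∈ S_{p,q} and equals 0 otherwise. -/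
/-!
Factor `(1 - X^{pq}) / ((1 - X^p)(1 - X^q))` as `(∑ₖ X^{pk}) · (∑_{b<p} X^{qb})`.
Its `n`-th coefficient counts the `b < p` with `qb ≤ n` and `p ∣ n - qb`. Such a `b` exists
iff `n ∈ S_{p,q}` (reduce the coefficient of `q` modulo `p`), and it is unique because `q` is
invertible modulo `p`.
-/

open PowerSeries Finset

namespace PowerSeries

variable {R : Type*} [CommRing R]

theorem coeff_expand_mk_one {p : ℕ} (hp : p ≠ 0) (n : ℕ) :
    coeff n (expand p hp (mk 1 : R⟦X⟧)) = if p ∣ n then 1 else 0 := by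
  split_ifs with h
  · obtain ⟨m, rfl⟩ := h
    simp [coeff_expand_mul]
  · exact coeff_expand_of_not_dvd p hp _ h

theorem expand_mk_one_mul_one_sub_X_pow {p : ℕ} (hp : p ≠ 0) :
    expand p hp (mk 1 : R⟦X⟧) * (1 - X ^ p) = 1 := by
  rw [← expand_X p hp, ← map_one (expand p hp), ← map_sub, ← map_mul,
    mk_one_mul_one_sub_eq_one]

theorem coeff_expand_mk_one_mul_geom_sum {p : ℕ} (hp : p ≠ 0) (q m n : ℕ) :
    coeff n (expand p hp (mk 1 : R⟦X⟧) * ∑ b ∈ range m, (X ^ q) ^ b) =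
      (#{b ∈ range m | q * b ≤ n ∧ p ∣ n - q * b} : R) := by
  simp only [mul_sum, map_sum, ← pow_mul, coeff_mul_X_pow', coeff_expand_mk_one, ← ite_and]
  rw [sum_boole]

theorem expand_mk_one_mul_geom_sum_mul_one_sub_X_pow_mul {p : ℕ} (hp : p ≠ 0) (q : ℕ) :
    expand p hp (mk 1 : R⟦X⟧) * (∑ b ∈ range p, (X ^ q) ^ b) * ((1 - X ^ p) * (1 - X ^ q)) =
      1 - X ^ (p * q) := by
  rw [mul_mul_mul_comm, expand_mk_one_mul_one_sub_X_pow, geom_sum_mul_neg, one_mul, ← pow_mul,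
    mul_comm]

end PowerSeries

namespace Nat

theorem exists_mul_add_mul_iff {p : ℕ} (hp : 0 < p) (q n : ℕ) :
    (∃ a b, n = a * p + b * q) ↔ ∃ b < p, q * b ≤ n ∧ p ∣ n - q * b := by
  constructor
  · rintro ⟨a, b, rfl⟩
    have hrep : a * p + b * q = p * (a + q * (b / p)) + q * (b % p) := by
      nth_rw 1 [← div_add_mod b p]
      ring
    refine ⟨b % p, mod_lt b hp, ?_, ?_⟩ <;> rw [hrep]
    · exact le_add_self
    · simp
  · rintro ⟨b, -, hle, c, hc⟩
    exact ⟨c, b, by rw [mul_comm c, mul_comm b]; omega⟩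

theorem eq_of_dvd_sub_mul {p q n b b' : ℕ} (hpq : p.Coprime q) (hb : b < p) (hb' : b' < p)
    (hle : q * b ≤ n) (hle' : q * b' ≤ n) (hdvd : p ∣ n - q * b) (hdvd' : p ∣ n - q * b') :
    b = b' := by
  have h : q * b ≡ q * b' [MOD p] :=
    ((modEq_iff_dvd' hle).mpr hdvd).trans ((modEq_iff_dvd' hle').mpr hdvd').symm
  simpa [ModEq, mod_eq_of_lt hb, mod_eq_of_lt hb'] using ModEq.cancel_left_of_coprime hpq h

open scoped Classical in
theorem card_filter_dvd_sub_mul {p q : ℕ} (hp : 0 < p) (hpq : p.Coprime q) (n : ℕ) :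
    #{b ∈ range p | q * b ≤ n ∧ p ∣ n - q * b} =
      if ∃ a b, n = a * p + b * q then 1 else 0 := by
  rw [exists_mul_add_mul_iff hp]
  split_ifs with h
  · obtain ⟨b, hb, hle, hdvd⟩ := h
    refine card_eq_one.mpr ⟨b, eq_singleton_iff_unique_mem.mpr ⟨by simp [*], ?_⟩⟩
    simp only [mem_filter, mem_range]
    rintro b' ⟨hb', hle', hdvd'⟩
    exact eq_of_dvd_sub_mul hpq hb' hb hle' hle hdvd' hdvd
  · simpa using h

end Nat

open scoped Classical in
theorem torus_knot_semigroup_power_series_general (p q : ℕ) (hp : 1 < p)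
    (hcop : Nat.Coprime p q) :
    IsUnit ((1 - X ^ p) * (1 - X ^ q) : PowerSeries ℤ) ∧
    ∀ n : ℕ,
      PowerSeries.coeff n
          ((1 - X ^ (p * q)) * Ring.inverse ((1 - X ^ p) * (1 - X ^ q) : PowerSeries ℤ)) =
        if ∃ a b : ℕ, n = a * p + b * q then (1 : ℤ) else 0 := by
  have hp0 : p ≠ 0 := by omega
  have hq0 : q ≠ 0 := by
    rintro rfl
    exact hp.ne' ((Nat.coprime_zero_right p).mp hcop)
  have hU : IsUnit ((1 - X ^ p) * (1 - X ^ q) : ℤ⟦X⟧) :=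
    (IsUnit.of_mul_eq_one_right _ (expand_mk_one_mul_one_sub_X_pow hp0)).mul
      (IsUnit.of_mul_eq_one_right _ (expand_mk_one_mul_one_sub_X_pow hq0))
  refine ⟨hU, fun n => ?_⟩
  rw [← expand_mk_one_mul_geom_sum_mul_one_sub_X_pow_mul hp0, mul_assoc,
    Ring.mul_inverse_cancel _ hU, mul_one, coeff_expand_mk_one_mul_geom_sum,
    Nat.card_filter_dvd_sub_mul (by omega) hcop]
  split_ifs <;> simp

open scoped Classical in
theorem torus_knot_semigroup_power_series (p q : ℕ) (hp : 1 < p) (hpq : p < q)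
    (hcop : Nat.Coprime p q) :
    IsUnit ((1 - X ^ p) * (1 - X ^ q) : PowerSeries ℤ) ∧
    ∀ n : ℕ,
      PowerSeries.coeff n
          ((1 - X ^ (p * q)) * Ring.inverse ((1 - X ^ p) * (1 - X ^ q) : PowerSeries ℤ)) =
        if ∃ a b : ℕ, n = a * p + b * q then (1 : ℤ) else 0 :=
  torus_knot_semigroup_power_series_general p q hp hcop
end

section
/- Let p and q be coprime integers with 1 < p < q. Then the nonzero coefficients of Δ_{p,q}(X) alternate in sign: if n < m are natural numbers such that the coefficients of X^n and X^m in Δ_{p,q} are both nonzero and the coefficient of X^k vanishes for all k with n < k < m, then the coefficient of X^n equals the negative of the coefficient of X^m. In particular Δ_{p,q}(X) = Σ_{i=0}^{d} (−1)^i X^{a_i} for some strictly increasing sequence of natural numbers a_0 < a_1 < ⋯ < a_d. -/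
/-!
Put `Q = ∑_{a < q, b < p} X^(a p + b q) = (∑_{a < q} X^(a p)) (∑_{b < p} X^(b q))`.
Multiplying the defining identity by `X^(pq) - 1` and cancelling `(X^p - 1)(X^q - 1)` gives
`Δ (X^(pq) - 1) = Q (X - 1)`. By coprimality the exponents `a p + b q` are pairwise distinct, so
the coefficients of `Q` lie in `{0, 1}`. Since `deg Δ = (p - 1)(q - 1) < pq`, the coefficients of
`Δ` are those of `(1 - X) Q`, i.e. the successive differences of a `0/1` sequence starting with
`1`, and the nonzero differences of such a sequence alternate between `1` and `-1`.
-/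

open Polynomial Finset

namespace Polynomial

variable {R : Type*}

section Alternating

variable [Ring R]

def HasAlternatingCoeffs (P : R[X]) : Prop :=
  ∀ n m : ℕ, n < m → P.coeff n ≠ 0 → P.coeff m ≠ 0 →
    (∀ k : ℕ, n < k → k < m → P.coeff k = 0) → P.coeff n = -P.coeff m

theorem HasAlternatingCoeffs.of_coeff_eq {P P' : R[X]} {N : ℕ} (hP' : P'.HasAlternatingCoeffs)
    (hdeg : P.natDegree < N) (hcoeff : ∀ k < N, P.coeff k = P'.coeff k) :
    P.HasAlternatingCoeffs := by
  intro n m hnm hn hm hgap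
  have hmN : m < N := (le_natDegree_of_ne_zero hm).trans_lt hdeg
  have hagree : ∀ k ≤ m, P.coeff k = P'.coeff k := fun k hk => hcoeff k (by omega)
  rw [hagree n hnm.le] at hn ⊢
  rw [hagree m le_rfl] at hm ⊢
  exact hP' n m hnm hn hm fun k hnk hkm => hagree k hkm.le ▸ hgap k hnk hkm

theorem coeff_one_sub_X_mul (Q : R[X]) (n : ℕ) :
    ((1 - X) * Q).coeff n = Q.coeff n - (X * Q).coeff n := by
  rw [sub_mul, one_mul, coeff_sub]

theorem coeff_eq_of_forall_coeff_one_sub_X_mul_eq_zero {Q : R[X]} {n m : ℕ} (hnm : n ≤ m)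
    (hgap : ∀ k, n < k → k ≤ m → ((1 - X) * Q).coeff k = 0) : Q.coeff m = Q.coeff n := by
  induction m, hnm using Nat.le_induction with
  | base => rfl
  | succ m hnm ih =>
    have hstep := hgap (m + 1) (by omega) le_rfl
    rw [coeff_one_sub_X_mul, coeff_X_mul, sub_eq_zero] at hstep
    rw [hstep, ih fun k hnk hkm => hgap k hnk (by omega)]

theorem hasAlternatingCoeffs_one_sub_X_mul {Q : R[X]}
    (hQ : ∀ n, Q.coeff n = 0 ∨ Q.coeff n = 1) : ((1 - X) * Q).HasAlternatingCoeffs := by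
  have hXQ : ∀ n, (X * Q).coeff n = 0 ∨ (X * Q).coeff n = 1 := by
    rintro (_ | n)
    · exact .inl (coeff_X_mul_zero Q)
    · rw [coeff_X_mul]; exact hQ n
  intro n m hnm hn hm hgap
  obtain ⟨m, rfl⟩ : ∃ m', m = m' + 1 := ⟨m - 1, by omega⟩
  have hconst : Q.coeff m = Q.coeff n :=
    coeff_eq_of_forall_coeff_one_sub_X_mul_eq_zero (by omega) fun k hnk hkm =>
      hgap k hnk (by omega)
  rw [coeff_one_sub_X_mul, coeff_X_mul, hconst, ne_eq, sub_eq_zero] at hm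
  rw [coeff_one_sub_X_mul] at hn ⊢
  rw [ne_eq, sub_eq_zero] at hn
  -- `Q.coeff (m + 1)` and `(X * Q).coeff n` both differ from `Q.coeff n` inside `{0, 1}`.
  have hjump : (X * Q).coeff n = Q.coeff (m + 1) := by
    rcases hQ n with h | h <;> rcases hQ (m + 1) with h' | h' <;> rcases hXQ n with h'' | h'' <;>
      simp_all
  rw [coeff_one_sub_X_mul, coeff_X_mul, hconst, hjump, neg_sub]

theorem HasAlternatingCoeffs.eq_sum_neg_one_pow_mul_X_pow [Nontrivial R] {P : R[X]}
    (hP : P.HasAlternatingCoeffs) (htrail : P.trailingCoeff = 1) :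
    ∃ d : ℕ, ∃ a : Fin (d + 1) → ℕ, StrictMono a ∧
      P = ∑ i : Fin (d + 1), (-1 : R[X]) ^ (i : ℕ) * X ^ (a i) := by
  have hP0 : P ≠ 0 := by rintro rfl; simp at htrail
  obtain ⟨d, hd⟩ : ∃ d, P.support.card = d + 1 :=
    Nat.exists_eq_add_one.mpr (card_pos.mpr (nonempty_support_iff.mpr hP0))
  set a := P.support.orderEmbOfFin hd
  have hgap (i : Fin d) (j : ℕ) (h₁ : a i.castSucc < j) (h₂ : j < a i.succ) :
      P.coeff j = 0 := by
    by_contra hj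
    obtain ⟨i', rfl⟩ : j ∈ Set.range a := by
      rw [range_orderEmbOfFin]; exact mem_support_iff.mpr hj
    rw [a.lt_iff_lt] at h₁ h₂
    exact (Fin.castSucc_lt_iff_succ_le.mp h₁).not_gt h₂
  have hsign (i : Fin (d + 1)) : P.coeff (a i) = (-1) ^ (i : ℕ) := by
    induction i using Fin.induction with
    | zero =>
      rw [Fin.val_zero, pow_zero, ← htrail, trailingCoeff, natTrailingDegree_eq_support_min' hP0]
      exact congrArg P.coeff (orderEmbOfFin_zero hd d.succ_pos)
    | succ i ih =>
      have halt := hP _ _ (a.strictMono i.castSucc_lt_succ) (mem_support_iff.mp (by simp [a]))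
        (mem_support_iff.mp (by simp [a])) (hgap i)
      rw [ih, Fin.val_castSucc] at halt
      rw [Fin.val_succ, pow_succ, mul_neg_one, halt, neg_neg]
  refine ⟨d, a, a.strictMono, ?_⟩
  conv_lhs => rw [P.as_sum_support, ← image_orderEmbOfFin_univ P.support hd,
    sum_image fun i _ j _ h => a.injective h]
  refine sum_congr rfl fun i _ => ?_
  rw [← C_mul_X_pow_eq_monomial, hsign, C_pow, map_neg, C_1]

end Alternating

theorem coeff_eq_coeff_one_sub_X_mul_of_mul_X_pow_sub_one_eq [CommRing R] {P Q : R[X]}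
    {N k : ℕ} (h : P * (X ^ N - 1) = Q * (X - 1)) (hk : k < N) :
    P.coeff k = ((1 - X) * Q).coeff k := by
  have hPQ : (1 - X) * Q = P - P * X ^ N := by linear_combination h
  rw [hPQ, coeff_sub, coeff_mul_X_pow', if_neg (by omega), sub_zero]

theorem coeff_sum_X_pow [Semiring R] (S : Finset ℕ) (n : ℕ) :
    (∑ s ∈ S, (X : R[X]) ^ s).coeff n = if n ∈ S then 1 else 0 := by
  simp [finsetSum_coeff, coeff_X_pow]

theorem geom_sum_X_pow_mul [Ring R] (n k : ℕ) :
    (∑ a ∈ range n, (X : R[X]) ^ (a * k)) * (X ^ k - 1) = X ^ (n * k) - 1 := by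
  simp_rw [mul_comm _ k, pow_mul]
  exact geom_sum_mul _ n

theorem X_pow_sub_one_ne_zero [Ring R] [Nontrivial R] {n : ℕ} (hn : 0 < n) :
    (X ^ n - 1 : R[X]) ≠ 0 := by
  simpa using X_pow_sub_C_ne_zero hn (1 : R)

end Polynomial

theorem Nat.Coprime.eq_of_mul_add_mul_eq {p q a b a' b' : ℕ} (hcop : p.Coprime q)
    (ha : a < q) (ha' : a' < q) (h : a * p + b * q = a' * p + b' * q) : a = a' ∧ b = b' := by
  have hmod : a * p ≡ a' * p [MOD q] := by
    simpa [Nat.ModEq, Nat.add_mul_mod_self_right] using congrArg (· % q) h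
  have haa' : a = a' := Nat.ModEq.eq_of_lt_of_lt (hmod.cancel_right_of_coprime hcop.symm) ha ha'
  subst haa'
  exact ⟨rfl, Nat.eq_of_mul_eq_mul_right (by omega : 0 < q) (by omega)⟩

section TorusKnot

variable {R : Type*}

def torusExponents (p q : ℕ) : Finset ℕ :=
  (range q ×ˢ range p).image fun x => x.1 * p + x.2 * q

theorem zero_mem_torusExponents {p q : ℕ} (hp : 0 < p) (hq : 0 < q) : 0 ∈ torusExponents p q :=
  mem_image.mpr ⟨(0, 0), by simp [hp, hq], by simp⟩

theorem geom_sum_mul_geom_sum_eq_sum_torusExponents [Semiring R] {p q : ℕ} (hcop : p.Coprime q) :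
    (∑ a ∈ range q, (X : R[X]) ^ (a * p)) * (∑ b ∈ range p, (X : R[X]) ^ (b * q)) =
      ∑ s ∈ torusExponents p q, (X : R[X]) ^ s := by
  rw [torusExponents, sum_image, sum_mul_sum, sum_product]
  · simp_rw [pow_add]
  · rintro ⟨a, b⟩ hab ⟨a', b'⟩ hab' h
    simp only [coe_product, Set.mem_prod, coe_range, Set.mem_Iio] at hab hab'
    obtain ⟨rfl, rfl⟩ := hcop.eq_of_mul_add_mul_eq hab.1 hab'.1 h
    rfl

def IsTorusKnotAlexanderPoly [CommRing R] (p q : ℕ) (Δ : R[X]) : Prop :=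
  Δ * ((X ^ p - 1) * (X ^ q - 1)) = (X ^ (p * q) - 1) * (X - 1)

namespace IsTorusKnotAlexanderPoly

variable [CommRing R] [IsDomain R] {p q : ℕ} {Δ : R[X]}

theorem mul_X_pow_mul_sub_one_eq (hΔ : IsTorusKnotAlexanderPoly p q Δ) (hp : 0 < p)
    (hq : 0 < q) (hcop : p.Coprime q) :
    Δ * (X ^ (p * q) - 1) = (∑ s ∈ torusExponents p q, X ^ s) * (X - 1) := by
  unfold IsTorusKnotAlexanderPoly at hΔ
  refine mul_right_cancel₀ (mul_ne_zero (X_pow_sub_one_ne_zero hp) (X_pow_sub_one_ne_zero hq)) ?_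
  rw [← geom_sum_mul_geom_sum_eq_sum_torusExponents hcop]
  calc Δ * (X ^ (p * q) - 1) * ((X ^ p - 1) * (X ^ q - 1))
      = (X ^ (q * p) - 1) * (X ^ (p * q) - 1) * (X - 1) := by
        rw [mul_comm q p]; linear_combination (X ^ (p * q) - 1) * hΔ
    _ = (∑ a ∈ range q, X ^ (a * p)) * (X ^ p - 1) *
          ((∑ b ∈ range p, X ^ (b * q)) * (X ^ q - 1)) * (X - 1) := by
        rw [geom_sum_X_pow_mul, geom_sum_X_pow_mul]
    _ = _ := by ring

theorem natDegree_add_eq (hΔ : IsTorusKnotAlexanderPoly p q Δ) (hp : 0 < p) (hq : 0 < q) :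
    Δ.natDegree + (p + q) = p * q + 1 := by
  have hX1 : (X - 1 : R[X]) ≠ 0 := by simpa using X_sub_C_ne_zero (1 : R)
  have hpq := X_pow_sub_one_ne_zero (R := R) (Nat.mul_pos hp hq)
  have hΔ0 : Δ ≠ 0 := by rintro rfl; exact mul_ne_zero hpq hX1 (by rw [← hΔ, zero_mul])
  have hdeg := congrArg natDegree hΔ
  rw [natDegree_mul hΔ0 (mul_ne_zero (X_pow_sub_one_ne_zero hp) (X_pow_sub_one_ne_zero hq)),
    natDegree_mul (X_pow_sub_one_ne_zero hp) (X_pow_sub_one_ne_zero hq), natDegree_mul hpq hX1,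
    ← C_1, natDegree_X_pow_sub_C, natDegree_X_pow_sub_C, natDegree_X_pow_sub_C,
    natDegree_X_sub_C] at hdeg
  exact hdeg

end IsTorusKnotAlexanderPoly

end TorusKnot

theorem torus_knot_alexander_alternating_signs (p q : ℕ) (hp : 1 < p) (hpq : p < q)
    (hcop : Nat.Coprime p q) (Δ : ℤ[X])
    (hΔ : Δ * ((X ^ p - 1) * (X ^ q - 1)) = (X ^ (p * q) - 1) * (X - 1)) :
    (∀ n m : ℕ, n < m → Δ.coeff n ≠ 0 → Δ.coeff m ≠ 0 →
      (∀ k : ℕ, n < k → k < m → Δ.coeff k = 0) → Δ.coeff n = -Δ.coeff m) ∧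
    ∃ d : ℕ, ∃ a : Fin (d + 1) → ℕ, StrictMono a ∧
      Δ = ∑ i : Fin (d + 1), (-1 : ℤ[X]) ^ (i : ℕ) * X ^ (a i) := by
  set Q : ℤ[X] := ∑ s ∈ torusExponents p q, X ^ s
  have hp0 : 0 < p := by omega
  have hq0 : 0 < q := by omega
  have hΔQ : Δ * (X ^ (p * q) - 1) = Q * (X - 1) :=
    IsTorusKnotAlexanderPoly.mul_X_pow_mul_sub_one_eq hΔ hp0 hq0 hcop
  have hdeg : Δ.natDegree < p * q := by
    have := IsTorusKnotAlexanderPoly.natDegree_add_eq hΔ hp0 hq0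
    omega
  have hcoeff (k : ℕ) (hk : k < p * q) : Δ.coeff k = ((1 - X) * Q).coeff k :=
    coeff_eq_coeff_one_sub_X_mul_of_mul_X_pow_sub_one_eq hΔQ hk
  have hQ : ∀ n, Q.coeff n = 0 ∨ Q.coeff n = 1 := fun n => by
    rw [coeff_sum_X_pow]; exact (ite_eq_or_eq ..).symm
  have halt : Δ.HasAlternatingCoeffs :=
    (hasAlternatingCoeffs_one_sub_X_mul hQ).of_coeff_eq hdeg hcoeff
  have hQ0 : Q.coeff 0 = 1 := by
    rw [coeff_sum_X_pow, if_pos (zero_mem_torusExponents hp0 hq0)]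
  have hΔ0 : Δ.coeff 0 = 1 := by
    rw [hcoeff 0 (Nat.mul_pos hp0 hq0), coeff_one_sub_X_mul, coeff_X_mul_zero, sub_zero, hQ0]
  have htrail : Δ.trailingCoeff = 1 := by
    rw [trailingCoeff_eq_coeff_zero (by simp [hΔ0]), hΔ0]
  exact ⟨halt, halt.eq_sum_neg_one_pow_mul_X_pow htrail⟩
end

section
/- Let p and q be coprime integers with 1 < p < q, and set 2g = (p − 1)(q − 1). Then the coefficient of X^0 in Δ_{p,q} is 1, the coefficient of X^1 is −1, the coefficient of X^{2g} is 1, and the coefficient of X^{2g−1} is −1. (That is, Δ_{p,q} has lowest order terms 1 − X and highest order terms X^{2g} − X^{2g−1}.) -/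
open Polynomial

set_option maxHeartbeats 1600000 in
theorem torus_knot_alexander_extreme_coeffs (p q : ℕ) (hp : 1 < p) (hpq : p < q)
    (hcop : Nat.Coprime p q) (Δ : ℤ[X])
    (hΔ : Δ * ((X ^ p - 1) * (X ^ q - 1)) = (X ^ (p * q) - 1) * (X - 1)) :
    Δ.coeff 0 = 1 ∧ Δ.coeff 1 = -1 ∧
    Δ.coeff ((p - 1) * (q - 1)) = 1 ∧ Δ.coeff ((p - 1) * (q - 1) - 1) = -1 := by
  have hq : 2 < q := by omega
  have hpqle : p + q ≤ p * q := by nlinarith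
  have hpq2 : p + q < p * q + 1 := by omega
  -- monicity facts
  have monP : ((X : ℤ[X]) ^ p - 1).Monic := by
    simpa using monic_X_pow_sub_C (1 : ℤ) (by omega : p ≠ 0)
  have monQ : ((X : ℤ[X]) ^ q - 1).Monic := by
    simpa using monic_X_pow_sub_C (1 : ℤ) (by omega : q ≠ 0)
  have monPQ : ((X : ℤ[X]) ^ (p * q) - 1).Monic := by
    simpa using monic_X_pow_sub_C (1 : ℤ) (by positivity : p * q ≠ 0)
  have monX1 : ((X : ℤ[X]) - 1).Monic := by
    simpa using monic_X_pow_sub_C (1 : ℤ) (by omega : 1 ≠ 0)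
  have monA : (((X : ℤ[X]) ^ p - 1) * ((X : ℤ[X]) ^ q - 1)).Monic := monP.mul monQ
  have monB : (((X : ℤ[X]) ^ (p * q) - 1) * ((X : ℤ[X]) - 1)).Monic := monPQ.mul monX1
  have degP : ((X : ℤ[X]) ^ p - 1).natDegree = p := by
    simpa using natDegree_X_pow_sub_C (n := p) (r := (1 : ℤ))
  have degQ : ((X : ℤ[X]) ^ q - 1).natDegree = q := by
    simpa using natDegree_X_pow_sub_C (n := q) (r := (1 : ℤ))
  have degPQ : ((X : ℤ[X]) ^ (p * q) - 1).natDegree = p * q := by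
    simpa using natDegree_X_pow_sub_C (n := p * q) (r := (1 : ℤ))
  have degX1 : ((X : ℤ[X]) - 1).natDegree = 1 := by
    simpa using natDegree_X_pow_sub_C (n := 1) (r := (1 : ℤ))
  have degA : (((X : ℤ[X]) ^ p - 1) * ((X : ℤ[X]) ^ q - 1)).natDegree = p + q := by
    rw [monP.natDegree_mul monQ, degP, degQ]
  have degB : (((X : ℤ[X]) ^ (p * q) - 1) * ((X : ℤ[X]) - 1)).natDegree = p * q + 1 := by
    rw [monPQ.natDegree_mul monX1, degPQ, degX1]
  have hΔ0 : Δ ≠ 0 := by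
    intro h
    rw [h, zero_mul] at hΔ
    exact monB.ne_zero hΔ.symm
  have degΔ : Δ.natDegree = p * q + 1 - (p + q) := by
    have := natDegree_mul hΔ0 monA.ne_zero
    rw [hΔ, degA, degB] at this
    omega
  have hd : (p - 1) * (q - 1) = p * q + 1 - (p + q) := by
    cases' p with p; · omega
    cases' q with q; · omega
    simp [Nat.succ_sub_one, Nat.mul_succ, Nat.succ_mul]
    ring_nf
    omega
  have leadΔ : Δ.coeff ((p - 1) * (q - 1)) = 1 := by
    rw [hd, ← degΔ, coeff_natDegree]
    have := leadingCoeff_mul Δ (((X : ℤ[X]) ^ p - 1) * ((X : ℤ[X]) ^ q - 1))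
    rw [hΔ, monB.leadingCoeff, monA.leadingCoeff, mul_one] at this
    exact this.symm
  -- expanded equation
  have expand : Δ * X ^ (p + q) - Δ * X ^ p - Δ * X ^ q + Δ
      = (X : ℤ[X]) ^ (p * q + 1) - X ^ (p * q) - X + 1 := by
    linear_combination hΔ
  have key : ∀ n, Δ.coeff n
      = - (if p + q ≤ n then Δ.coeff (n - (p + q)) else 0)
        + (if p ≤ n then Δ.coeff (n - p) else 0)
        + (if q ≤ n then Δ.coeff (n - q) else 0)
        + ((if n = p * q + 1 then (1:ℤ) else 0) - (if n = p * q then 1 else 0)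
          - (if 1 = n then 1 else 0) + (if n = 0 then 1 else 0)) := by
    intro n
    have := congrArg (fun f : ℤ[X] => f.coeff n) expand
    simp only [coeff_sub, coeff_add, coeff_mul_X_pow', coeff_X_pow, coeff_one,
      Polynomial.coeff_X, coeff_one] at this
    linarith [this]
  have c0 : Δ.coeff 0 = 1 := by
    have := key 0
    rw [if_neg (by omega : ¬ p + q ≤ 0), if_neg (by omega : ¬ p ≤ 0),
      if_neg (by omega : ¬ q ≤ 0), if_neg (by omega : ¬ (0:ℕ) = p * q + 1),
      if_neg (by nlinarith : ¬ (0:ℕ) = p * q), if_neg (by omega : ¬ (1:ℕ) = 0),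
      if_pos rfl] at this
    linarith
  have c1 : Δ.coeff 1 = -1 := by
    have := key 1
    rw [if_neg (by omega : ¬ p + q ≤ 1), if_neg (by omega : ¬ p ≤ 1),
      if_neg (by omega : ¬ q ≤ 1), if_neg (by omega : ¬ (1:ℕ) = p * q + 1),
      if_neg (by nlinarith : ¬ (1:ℕ) = p * q), if_pos rfl,
      if_neg (by omega : ¬ (1:ℕ) = 0)] at this
    linarith
  have hdeg0 : Δ.coeff (p * q) = 0 := by
    apply coeff_eq_zero_of_natDegree_lt
    rw [degΔ]; omega
  have hdeg1 : Δ.coeff (p * q - p) = 0 := by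
    apply coeff_eq_zero_of_natDegree_lt
    rw [degΔ]; omega
  have hdeg2 : Δ.coeff (p * q - q) = 0 := by
    apply coeff_eq_zero_of_natDegree_lt
    rw [degΔ]; omega
  have ctop : Δ.coeff ((p - 1) * (q - 1) - 1) = -1 := by
    have h1 : p ≤ p * q := by nlinarith
    have h2 : q ≤ p * q := by nlinarith
    have h3 : ¬ (1:ℕ) = p * q := by nlinarith
    have h4 : ¬ p * q = 0 := by positivity
    have := key (p * q)
    rw [if_pos hpqle, if_pos h1, if_pos h2, if_neg (by omega : ¬ p * q = p * q + 1),
      if_pos rfl, if_neg h3, if_neg h4, hdeg0, hdeg1, hdeg2] at this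
    have hd1 : (p - 1) * (q - 1) - 1 = p * q - (p + q) := by omega
    rw [hd1]
    linarith
  exact ⟨c0, c1, leadΔ, ctop⟩
end

section
/- Let p and q be coprime integers with 1 < p < q. Then for every integer i with 1 < i < p, the coefficient of X^i in Δ_{p,q}(X) is 0. -/
open Polynomial

theorem torus_knot_alexander_low_coeffs_vanish (p q : ℕ) (hp : 1 < p) (hpq : p < q)
    (hcop : Nat.Coprime p q) (Δ : ℤ[X])
    (hΔ : Δ * ((X ^ p - 1) * (X ^ q - 1)) = (X ^ (p * q) - 1) * (X - 1)) :
    ∀ i : ℕ, 1 < i → i < p → Δ.coeff i = 0 := by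
  intro i hi1 hip
  have e1 : Δ * ((X ^ p - 1) * (X ^ q - 1))
      = Δ * X ^ (p + q) - Δ * X ^ p - Δ * X ^ q + Δ := by
    rw [pow_add]; ring
  have e2 : ((X : ℤ[X]) ^ (p * q) - 1) * (X - 1)
      = X ^ (p * q + 1) - X ^ (p * q) - X ^ 1 + 1 := by
    rw [pow_succ]; ring
  rw [e1, e2] at hΔ
  have h := congrArg (fun f => f.coeff i) hΔ
  simp only [coeff_add, coeff_sub, coeff_mul_X_pow', coeff_X_pow, coeff_one] at h
  have h1 : ¬ (p + q ≤ i) := by omega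
  have h2 : ¬ (p ≤ i) := by omega
  have h3 : ¬ (q ≤ i) := by omega
  have h4 : i ≠ p * q + 1 := by nlinarith
  have h5 : i ≠ p * q := by nlinarith
  have h6 : i ≠ 1 := by omega
  have h7 : i ≠ 0 := by omega
  simp [h1, h2, h3, h4, h5, h6, h7] at h
  exact h
end

section
/- Let p and q be coprime integers with 1 < p < q, and let c > 1 be an integer. Then the c-th cyclotomic polynomial Φ_c(X) divides Δ_{p,q}(X) in ℤ[X] if and only if c divides pq, c does not divide p, and c does not divide q. -/
open Polynomial

private lemma cyc_not_dvd_cyc {c d : ℕ} (hc : 0 < c) (hne : c ≠ d) :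
    ¬ cyclotomic c ℚ ∣ cyclotomic d ℚ := fun h =>
  (cyclotomic.irreducible_rat hc).not_isUnit
    ((cyclotomic.isCoprime_rat hne).isUnit_of_dvd' dvd_rfl h)

private lemma cyc_dvd_X_pow_sub_one_iff {c n : ℕ} (hc : 0 < c) (hn : 0 < n) :
    cyclotomic c ℚ ∣ X ^ n - 1 ↔ c ∣ n := by
  constructor
  · intro h
    rw [← prod_cyclotomic_eq_X_pow_sub_one hn ℚ] at h
    obtain ⟨d, hd, hdvd⟩ :=
      (cyclotomic.irreducible_rat hc).prime.exists_mem_finset_dvd h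
    rcases eq_or_ne c d with rfl | hne
    · exact Nat.dvd_of_mem_divisors hd
    · exact absurd hdvd (cyc_not_dvd_cyc hc hne)
  · rintro ⟨k, rfl⟩
    refine (cyclotomic.dvd_X_pow_sub_one c ℚ).trans ?_
    have := sub_dvd_pow_sub_pow (X ^ c : ℚ[X]) 1 k
    simpa [← pow_mul] using this

theorem torus_knot_alexander_cyclotomic_divides_iff (p q c : ℕ) (hp : 1 < p) (hpq : p < q)
    (hcop : Nat.Coprime p q) (hc : 1 < c) (Δ : ℤ[X])
    (hΔ : Δ * ((X ^ p - 1) * (X ^ q - 1)) = (X ^ (p * q) - 1) * (X - 1)) :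
    cyclotomic c ℤ ∣ Δ ↔ c ∣ p * q ∧ ¬ c ∣ p ∧ ¬ c ∣ q := by
  have hc0 : 0 < c := by omega
  have hp0 : 0 < p := by omega
  have hq0 : 0 < q := by omega
  have hpq0 : 0 < p * q := Nat.mul_pos hp0 hq0
  set P : ℚ[X] := cyclotomic c ℚ with hP
  have hPprime : Prime P := (cyclotomic.irreducible_rat hc0).prime
  set D : ℚ[X] := Δ.map (Int.castRingHom ℚ) with hD
  have key : D * ((X ^ p - 1) * (X ^ q - 1)) = (X ^ (p * q) - 1) * (X - 1) := by
    have := congrArg (Polynomial.map (Int.castRingHom ℚ)) hΔ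
    simpa [Polynomial.map_mul, Polynomial.map_sub, Polynomial.map_pow] using this
  have hX1 : ¬ P ∣ (X - 1 : ℚ[X]) := by
    have := cyc_not_dvd_cyc hc0 (show c ≠ 1 by omega)
    rwa [cyclotomic_one] at this
  have hsqf : Squarefree (X ^ (p * q) - 1 : ℚ[X]) :=
    (X_pow_sub_one_separable_iff.mpr (by exact_mod_cast hpq0.ne')).squarefree
  have hmain : cyclotomic c ℤ ∣ Δ ↔ P ∣ D := by
    rw [hD, hP, ← map_cyclotomic c (Int.castRingHom ℚ),
      map_dvd_map _ (Int.cast_injective) (cyclotomic.monic c ℤ)]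
  rw [hmain]
  constructor
  · intro hPD
    -- P divides the RHS
    have hRHS : P ∣ (X ^ (p * q) - 1) * (X - 1) := by
      rw [← key]; exact hPD.mul_right _
    have h1 : c ∣ p * q := by
      rcases hPprime.dvd_or_dvd hRHS with h | h
      · exact (cyc_dvd_X_pow_sub_one_iff hc0 hpq0).mp h
      · exact absurd h hX1
    have hPne : P ≠ 0 := hPprime.ne_zero
    have hsqC : ¬ P * P ∣ ((X ^ (p * q) - 1) * (X - 1) : ℚ[X]) := by
      intro h
      have hPC : P ∣ (X ^ (p * q) - 1 : ℚ[X]) :=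
        ((hPprime.dvd_or_dvd ((dvd_mul_right P P).trans h)).resolve_right hX1)
      obtain ⟨C1, hC1⟩ := hPC
      rw [hC1] at h
      have h2 : P ∣ C1 * (X - 1) := by
        have h' : P * P ∣ P * (C1 * (X - 1)) := by rwa [← mul_assoc]
        exact (mul_dvd_mul_iff_left hPne).mp h'
      have hPC1 : P ∣ C1 := (hPprime.dvd_or_dvd h2).resolve_right hX1
      exact hPprime.not_isUnit (hsqf P (by rw [hC1]; exact mul_dvd_mul_left P hPC1))
    have not_both : ∀ m : ℕ, P ∣ (X ^ m - 1 : ℚ[X]) →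
        (X ^ m - 1 : ℚ[X]) ∣ (X ^ p - 1) * (X ^ q - 1) → False := by
      intro m hPm hdvd
      apply hsqC
      rw [← key]
      exact mul_dvd_mul hPD (hPm.trans hdvd)
    refine ⟨h1, fun hcp => ?_, fun hcq => ?_⟩
    · exact not_both p ((cyc_dvd_X_pow_sub_one_iff hc0 hp0).mpr hcp) (dvd_mul_right _ _)
    · exact not_both q ((cyc_dvd_X_pow_sub_one_iff hc0 hq0).mpr hcq) (dvd_mul_left _ _)
  · rintro ⟨h1, h2, h3⟩
    have hPC : P ∣ D * ((X ^ p - 1) * (X ^ q - 1)) := by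
      rw [key]
      exact ((cyc_dvd_X_pow_sub_one_iff hc0 hpq0).mpr h1).mul_right _
    rcases hPprime.dvd_or_dvd hPC with h | h
    · exact h
    rcases hPprime.dvd_or_dvd h with h | h
    · exact absurd ((cyc_dvd_X_pow_sub_one_iff hc0 hp0).mp h) h2
    · exact absurd ((cyc_dvd_X_pow_sub_one_iff hc0 hq0).mp h) h3
end

section
/- Let p and q be coprime integers with 1 < p < q. Then Δ_{p,q}(X) is squarefree as an element of ℤ[X] (it is a product of pairwise distinct cyclotomic polynomials). -/
open Polynomial

lemma squarefree_X_pow_sub_one_int (n : ℕ) (hn : n ≠ 0) :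
    Squarefree ((X : ℤ[X]) ^ n - 1) := by
  have hQ : Squarefree ((X : ℚ[X]) ^ n - 1) := by
    refine (X_pow_sub_one_separable_iff.mpr ?_).squarefree
    exact_mod_cast hn
  have hmonic : ((X : ℤ[X]) ^ n - 1).Monic := by
    simpa using monic_X_pow_sub_C (1 : ℤ) hn
  intro g hg
  have hinj : Function.Injective (Int.castRingHom ℚ) := Int.cast_injective
  have hmapdvd : (g.map (Int.castRingHom ℚ)) * (g.map (Int.castRingHom ℚ)) ∣
      ((X : ℚ[X]) ^ n - 1) := by
    have := Polynomial.map_dvd (Int.castRingHom ℚ) hg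
    simpa [Polynomial.map_mul] using this
  have hunit : IsUnit (g.map (Int.castRingHom ℚ)) := hQ _ hmapdvd
  have hdeg : g.natDegree = 0 := by
    have := natDegree_eq_zero_of_isUnit hunit
    rwa [natDegree_map_eq_of_injective hinj] at this
  have hgC : g = C (g.coeff 0) := eq_C_of_natDegree_eq_zero hdeg
  have hCdvd : C (g.coeff 0) ∣ (X : ℤ[X]) ^ n - 1 := by
    rw [← hgC]; exact dvd_of_mul_right_dvd hg
  have := hmonic.isPrimitive (g.coeff 0) hCdvd
  rw [hgC]
  exact this.map C

theorem torus_knot_alexander_squarefree (p q : ℕ) (hp : 1 < p) (hpq : p < q)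
    (hcop : Nat.Coprime p q) (Δ : ℤ[X])
    (hΔ : Δ * ((X ^ p - 1) * (X ^ q - 1)) = (X ^ (p * q) - 1) * (X - 1)) :
    Squarefree Δ := by
  have hgeom : ((X : ℤ[X]) - 1) * (∑ i ∈ Finset.range q, X ^ i) = X ^ q - 1 := by
    rw [mul_comm]; exact geom_sum_mul X q
  have hX1 : (X : ℤ[X]) - 1 ≠ 0 := by
    intro h
    have := congrArg (fun f => Polynomial.eval 0 f) h
    simp at this
  have key : Δ * ((X ^ p - 1) * (∑ i ∈ Finset.range q, X ^ i)) * (X - 1)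
      = (X ^ (p * q) - 1) * (X - 1) := by
    calc Δ * ((X ^ p - 1) * (∑ i ∈ Finset.range q, X ^ i)) * (X - 1)
        = Δ * ((X ^ p - 1) * (((X : ℤ[X]) - 1) * (∑ i ∈ Finset.range q, X ^ i))) := by ring
      _ = Δ * ((X ^ p - 1) * (X ^ q - 1)) := by rw [hgeom]
      _ = (X ^ (p * q) - 1) * (X - 1) := hΔ
  have key' : Δ * ((X ^ p - 1) * (∑ i ∈ Finset.range q, X ^ i)) = X ^ (p * q) - 1 :=
    mul_right_cancel₀ hX1 key
  have hdvd : Δ ∣ (X : ℤ[X]) ^ (p * q) - 1 := ⟨_, key'.symm⟩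
  exact (squarefree_X_pow_sub_one_int (p * q) (by have := hp.trans hpq; positivity)).squarefree_of_dvd hdvd
end

section
/- Let p, q be coprime integers with 1 < p < q and let r, s be coprime integers with 1 < r < s. If Δ_{r,s}(X) divides Δ_{p,q}(X) in ℤ[X], then rs divides pq. -/
open Polynomial

theorem torus_knot_alexander_dvd_implies_product_dvd (p q r s : ℕ)
    (hp : 1 < p) (hpq : p < q) (hcop : Nat.Coprime p q)
    (hr : 1 < r) (hrs : r < s) (hcop' : Nat.Coprime r s)
    (Δpq Δrs : ℤ[X])
    (hΔpq : Δpq * ((X ^ p - 1) * (X ^ q - 1)) = (X ^ (p * q) - 1) * (X - 1))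
    (hΔrs : Δrs * ((X ^ r - 1) * (X ^ s - 1)) = (X ^ (r * s) - 1) * (X - 1))
    (hdvd : Δrs ∣ Δpq) :
    r * s ∣ p * q := by
  have hr0 : 0 < r := by omega
  have hs1 : 1 < s := by omega
  have hrs0 : (r * s : ℕ) ≠ 0 := by positivity
  obtain ⟨ζ, hζ⟩ : ∃ ζ : ℂ, IsPrimitiveRoot ζ (r * s) :=
    ⟨_, Complex.isPrimitiveRoot_exp _ hrs0⟩
  have h1 := congrArg (aeval ζ) hΔrs
  simp only [map_mul, map_sub, map_pow, map_one, aeval_X] at h1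
  have hrsone : ζ ^ (r * s) = 1 := hζ.pow_eq_one
  have hrne : ζ ^ r - 1 ≠ 0 := by
    rw [sub_ne_zero]
    intro h
    have := Nat.le_of_dvd hr0 ((hζ.pow_eq_one_iff_dvd r).mp h)
    nlinarith
  have hsne : ζ ^ s - 1 ≠ 0 := by
    rw [sub_ne_zero]
    intro h
    have := Nat.le_of_dvd (by omega) ((hζ.pow_eq_one_iff_dvd s).mp h)
    nlinarith
  have hΔrs0 : aeval ζ Δrs = 0 := by
    rw [hrsone, sub_self, zero_mul] at h1
    rcases mul_eq_zero.mp h1 with h | h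
    · exact h
    · rcases mul_eq_zero.mp h with h | h
      · exact absurd h hrne
      · exact absurd h hsne
  obtain ⟨c, hc⟩ := hdvd
  have hΔpq0 : aeval ζ Δpq = 0 := by
    rw [hc, map_mul, hΔrs0, zero_mul]
  have h2 := congrArg (aeval ζ) hΔpq
  simp only [map_mul, map_sub, map_pow, map_one, aeval_X, hΔpq0, zero_mul] at h2
  have hζne1 : ζ - 1 ≠ 0 := by
    rw [sub_ne_zero]
    intro h
    have := Nat.le_of_dvd one_pos ((hζ.pow_eq_one_iff_dvd 1).mp (by rw [pow_one, h]))
    nlinarith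
  have : ζ ^ (p * q) = 1 := by
    rcases mul_eq_zero.mp h2.symm with h | h
    · rwa [sub_eq_zero] at h
    · exact absurd h hζne1
  exact (hζ.pow_eq_one_iff_dvd (p * q)).mp this
end

section
/- Let s be a natural number and let U, V, A, B ∈ ℤ[[X]] be formal power series such that the constant coefficients of U and V are both 1, the coefficients of X^i in U and in V agree for all i < s, and U·A = V·B. Then the coefficients of X^i in A and in B agree for all i < s, and the coefficient of X^s in A equals the coefficient of X^s in B plus (coefficient of X^s in V minus coefficient of X^s in U) times the constant coefficient of B. -/
/-! Since `U * (A - B) = (V - U) * B` and `V - U` is divisible by `X ^ s`, so is `A - B`, `U` being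
a unit. Comparing the coefficients of `X ^ s` on both sides then only sees the constant
coefficients of `U` and `B`. -/

namespace PowerSeries

variable {R : Type*} [CommRing R]

theorem X_pow_dvd_sub_iff {s : ℕ} {F G : R⟦X⟧} :
    X ^ s ∣ F - G ↔ ∀ i < s, coeff i F = coeff i G := by
  simp only [X_pow_dvd_iff, map_sub, sub_eq_zero]

theorem coeff_mul_of_X_pow_dvd {s : ℕ} (F : R⟦X⟧) {D : R⟦X⟧} (hD : X ^ s ∣ D) :
    coeff s (F * D) = constantCoeff F * coeff s D := by
  obtain ⟨E, rfl⟩ := hD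
  have hcoeff (G : R⟦X⟧) : coeff s (X ^ s * G) = constantCoeff G := by
    simpa using coeff_X_pow_mul G s 0
  rw [mul_left_comm, hcoeff, hcoeff, map_mul]

theorem X_pow_dvd_sub_of_mul_eq_mul {s : ℕ} {U V A B : R⟦X⟧} (hU : IsUnit U)
    (hUV : X ^ s ∣ V - U) (heq : U * A = V * B) : X ^ s ∣ A - B := by
  have hsub : U * (A - B) = (V - U) * B := by linear_combination heq
  exact hU.dvd_mul_left.mp (hsub ▸ hUV.mul_right B)

end PowerSeries

open PowerSeries in
theorem power_series_coefficient_comparison_general (s : ℕ) (U V A B : PowerSeries ℤ)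
    (hU : PowerSeries.constantCoeff U = 1)
    (hagree : ∀ i : ℕ, i < s → PowerSeries.coeff i U = PowerSeries.coeff i V)
    (heq : U * A = V * B) :
    (∀ i : ℕ, i < s → PowerSeries.coeff i A = PowerSeries.coeff i B) ∧
    PowerSeries.coeff s A =
      PowerSeries.coeff s B +
        (PowerSeries.coeff s V - PowerSeries.coeff s U) * PowerSeries.constantCoeff B := by
  have hUunit : IsUnit U := isUnit_iff_constantCoeff.mpr (hU ▸ isUnit_one)
  have hVU : X ^ s ∣ V - U := X_pow_dvd_sub_iff.mpr fun i hi => (hagree i hi).symm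
  have hAB : X ^ s ∣ A - B := X_pow_dvd_sub_of_mul_eq_mul hUunit hVU heq
  refine ⟨X_pow_dvd_sub_iff.mp hAB, ?_⟩
  have hcoeff := congrArg (coeff s) (show U * (A - B) = B * (V - U) by linear_combination heq)
  rw [coeff_mul_of_X_pow_dvd U hAB, coeff_mul_of_X_pow_dvd B hVU, hU, map_sub, map_sub] at hcoeff
  linear_combination hcoeff

theorem power_series_coefficient_comparison (s : ℕ) (U V A B : PowerSeries ℤ)
    (hU : PowerSeries.constantCoeff U = 1) (hV : PowerSeries.constantCoeff V = 1)
    (hagree : ∀ i : ℕ, i < s → PowerSeries.coeff i U = PowerSeries.coeff i V)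
    (heq : U * A = V * B) :
    (∀ i : ℕ, i < s → PowerSeries.coeff i A = PowerSeries.coeff i B) ∧
    PowerSeries.coeff s A =
      PowerSeries.coeff s B +
        (PowerSeries.coeff s V - PowerSeries.coeff s U) * PowerSeries.constantCoeff B :=
  power_series_coefficient_comparison_general s U V A B hU hagree heq
end

section
/- Let p, q be coprime integers with 1 < p < q and let r, s be coprime integers with 1 < r < s, and suppose r < p. Regard Δ_{p,q}(X) and Δ_{r,s}(X) as elements of ℤ[[X]]; since Δ_{r,s} has constant coefficient 1 it is a unit in ℤ[[X]]. Then the formal power series F = Δ_{p,q}(X)^2 · Δ_{r,s}(X)^{−1} satisfies F ≡ 1 − X − X^r (mod X^{r+1}); that is, the coefficient of X^0 in F is 1, the coefficient of X^1 is −1, the coefficient of X^i is 0 for 1 < i < r, and the coefficient of X^r is −1. -/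
open Polynomial

/-!
Modulo `X ^ (r + 1)` the powers `X ^ p`, `X ^ q`, `X ^ (p * q)`, `X ^ s`, `X ^ (r * s)` all vanish,
so the defining relations give `Δpq ≡ 1 - X` and `Δrs * (1 - X ^ r) ≡ 1 - X`. Hence
`F * (1 - X) ≡ F * Δrs * (1 - X ^ r) ≡ (1 - X) ^ 2 * (1 - X ^ r)`, and cancelling the unit `1 - X`
leaves `F ≡ (1 - X) * (1 - X ^ r) ≡ 1 - X - X ^ r`.
-/

section NilpotentX

variable {R : Type*} [CommRing R] {x d : R} {p q : ℕ}

theorem mul_one_sub_pow_eq_one_sub_of_pow_eq_zero (hq : x ^ q = 0) (hpq : x ^ (p * q) = 0)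
    (hd : d * ((x ^ p - 1) * (x ^ q - 1)) = (x ^ (p * q) - 1) * (x - 1)) :
    d * (1 - x ^ p) = 1 - x := by
  rw [hq, hpq] at hd
  linear_combination hd

theorem eq_one_sub_sub_pow_of_mul_eq_sq {f : R} {r : ℕ} (hx : x ^ (r + 1) = 0)
    (hd : d * (1 - x ^ r) = 1 - x) (hf : f * d = (1 - x) ^ 2) : f = 1 - x - x ^ r := by
  have hunit : IsUnit (1 - x) := IsNilpotent.isUnit_one_sub ⟨r + 1, hx⟩
  refine hunit.mul_left_cancel ?_
  linear_combination (1 - x ^ r) * hf - f * hd + (1 - x) * hx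

end NilpotentX

theorem PowerSeries.mk_span_X_pow_eq_iff {R : Type*} [CommRing R] {n : ℕ}
    {f g : PowerSeries R} :
    Ideal.Quotient.mk (Ideal.span {PowerSeries.X ^ n}) f = Ideal.Quotient.mk _ g ↔
      ∀ m < n, PowerSeries.coeff m f = PowerSeries.coeff m g := by
  simp only [Ideal.Quotient.eq, Ideal.mem_span_singleton, PowerSeries.X_pow_dvd_iff, map_sub,
    sub_eq_zero]

theorem Polynomial.coeff_zero_eq_one_of_mul_eq {R : Type*} [CommRing R] {d : R[X]} {p q : ℕ}
    (hp : p ≠ 0) (hq : q ≠ 0)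
    (hd : d * ((X ^ p - 1) * (X ^ q - 1)) = (X ^ (p * q) - 1) * (X - 1)) : d.coeff 0 = 1 := by
  have := congrArg (eval 0) hd
  simp [hp, hq] at this
  simpa [coeff_zero_eq_eval_zero] using this

theorem two_Tpq_minus_Trs_alexander_obstruction_general (p q r s : ℕ)
    (hpq : p < q)
    (hr : 1 < r) (hrs : r < s) (hrp : r < p)
    (Δpq Δrs : ℤ[X])
    (hΔpq : Δpq * ((X ^ p - 1) * (X ^ q - 1)) = (X ^ (p * q) - 1) * (X - 1))
    (hΔrs : Δrs * ((X ^ r - 1) * (X ^ s - 1)) = (X ^ (r * s) - 1) * (X - 1))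
    (F : PowerSeries ℤ)
    (hF : F = (Δpq : PowerSeries ℤ) ^ 2 * Ring.inverse (Δrs : PowerSeries ℤ)) :
    PowerSeries.coeff 0 F = 1 ∧ PowerSeries.coeff 1 F = -1 ∧
    (∀ i : ℕ, 1 < i → i < r → PowerSeries.coeff i F = 0) ∧
    PowerSeries.coeff r F = -1 := by
  set I := Ideal.span {(PowerSeries.X : PowerSeries ℤ) ^ (r + 1)}
  let π : ℤ[X] →+* PowerSeries ℤ ⧸ I := (Ideal.Quotient.mk I).comp coeToPowerSeries.ringHom
  have hπX : π X = Ideal.Quotient.mk I PowerSeries.X := by simp [π]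
  have hx : π X ^ (r + 1) = 0 := by
    rw [hπX, ← map_pow, Ideal.Quotient.eq_zero_iff_mem]
    exact Ideal.mem_span_singleton_self _
  have hvanish : ∀ n, r + 1 ≤ n → π X ^ n = 0 := fun n hn => pow_eq_zero_of_le hn hx
  have hmap : ∀ {a b : ℕ} {d : ℤ[X]},
      d * ((X ^ a - 1) * (X ^ b - 1)) = (X ^ (a * b) - 1) * (X - 1) →
      π d * ((π X ^ a - 1) * (π X ^ b - 1)) = (π X ^ (a * b) - 1) * (π X - 1) := fun h => by
    simpa using congrArg π h
  have hΔpq' : π Δpq = 1 - π X := by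
    have h := mul_one_sub_pow_eq_one_sub_of_pow_eq_zero (hvanish q (by omega))
      (hvanish _ (by nlinarith)) (hmap hΔpq)
    rwa [hvanish p (by omega), sub_zero, mul_one] at h
  have hΔrs' : π Δrs * (1 - π X ^ r) = 1 - π X :=
    mul_one_sub_pow_eq_one_sub_of_pow_eq_zero (hvanish s (by omega))
      (hvanish _ (by nlinarith)) (hmap hΔrs)
  have hunit : IsUnit (Δrs : PowerSeries ℤ) := by
    rw [PowerSeries.isUnit_iff_constantCoeff, Polynomial.constantCoeff_coe,
      coeff_zero_eq_one_of_mul_eq (by omega) (by omega) hΔrs]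
    exact isUnit_one
  have hFΔ : Ideal.Quotient.mk I F * π Δrs = (1 - π X) ^ 2 := by
    rw [← hΔpq', hF]
    simp only [π, RingHom.comp_apply, ← map_mul, ← map_pow, coeToPowerSeries.ringHom_apply,
      Ring.inverse_mul_cancel_right _ _ hunit]
  have hF' :
      Ideal.Quotient.mk I F = Ideal.Quotient.mk I (1 - PowerSeries.X - PowerSeries.X ^ r) := by
    rw [eq_one_sub_sub_pow_of_mul_eq_sq hx hΔrs' hFΔ, hπX]
    simp
  have hcoeff := PowerSeries.mk_span_X_pow_eq_iff.mp hF'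
  refine ⟨?_, ?_, fun i h1 h2 => ?_, ?_⟩ <;> rw [hcoeff _ (by omega)] <;>
    simp [PowerSeries.coeff_X_pow, PowerSeries.coeff_X, PowerSeries.coeff_one] <;> omega

theorem two_Tpq_minus_Trs_alexander_obstruction (p q r s : ℕ)
    (hp : 1 < p) (hpq : p < q) (hcop : Nat.Coprime p q)
    (hr : 1 < r) (hrs : r < s) (hcop' : Nat.Coprime r s) (hrp : r < p)
    (Δpq Δrs : ℤ[X])
    (hΔpq : Δpq * ((X ^ p - 1) * (X ^ q - 1)) = (X ^ (p * q) - 1) * (X - 1))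
    (hΔrs : Δrs * ((X ^ r - 1) * (X ^ s - 1)) = (X ^ (r * s) - 1) * (X - 1))
    (F : PowerSeries ℤ)
    (hF : F = (Δpq : PowerSeries ℤ) ^ 2 * Ring.inverse (Δrs : PowerSeries ℤ)) :
    PowerSeries.coeff 0 F = 1 ∧ PowerSeries.coeff 1 F = -1 ∧
    (∀ i : ℕ, 1 < i → i < r → PowerSeries.coeff i F = 0) ∧
    PowerSeries.coeff r F = -1 :=
  two_Tpq_minus_Trs_alexander_obstruction_general p q r s hpq hr hrs hrp Δpq Δrs hΔpq hΔrs F hF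
end

section
/- Let (p_1, q_1), …, (p_m, q_m) and (p_1', q_1'), …, (p_n', q_n') be pairs of coprime integers with 1 < p_i < q_i and 1 < p_j' < q_j' for all i, j, and let P(X) ∈ ℤ[X] be a polynomial whose constant coefficient is 1 and whose coefficient of X is −1. If Δ_{p_1,q_1}(X) ⋯ Δ_{p_m,q_m}(X) = P(X) · Δ_{p_1',q_1'}(X) ⋯ Δ_{p_n',q_n'}(X) in ℤ[X], then m = n + 1. -/
/-!
Compare coefficients of `X`. Modulo `X ^ 2` the defining identity of `Δ_{p,q}` reads
`Δ_{p,q} * 1 = -(X - 1)`, so every `Δ_{p,q}` is `1 - X` modulo `X ^ 2`; for polynomials with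
constant coefficient `1` the coefficient of `X` is additive under products. Hence the left side has
`X`-coefficient `-m` and the right side `-1 - n`.
-/

open Polynomial

namespace Polynomial

theorem coeff_one_mul {R : Type*} [Semiring R] (f g : R[X]) :
    (f * g).coeff 1 = f.coeff 0 * g.coeff 1 + f.coeff 1 * g.coeff 0 := by
  simp [coeff_mul, Finset.Nat.antidiagonal_succ]

theorem coeff_one_prod_of_coeff_zero_eq_one {R ι : Type*} [CommSemiring R] (s : Finset ι)
    (f : ι → R[X]) (h : ∀ i ∈ s, (f i).coeff 0 = 1) :
    (∏ i ∈ s, f i).coeff 1 = ∑ i ∈ s, (f i).coeff 1 := by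
  induction s using Finset.cons_induction with
  | empty => simp [coeff_one]
  | cons a s _ ih =>
    have hs : ∀ i ∈ s, (f i).coeff 0 = 1 := fun i hi => h i (Finset.mem_cons_of_mem hi)
    rw [Finset.prod_cons, Finset.sum_cons, coeff_one_mul, coeff_zero_prod,
      Finset.prod_eq_one hs, h a (Finset.mem_cons_self a s), ih hs, one_mul, mul_one, add_comm]

section

variable {R : Type*} [CommRing R] {a : ℕ}

theorem coeff_zero_X_pow_sub_one (ha : 0 < a) : ((X : R[X]) ^ a - 1).coeff 0 = -1 := by
  simp [coeff_X_pow, coeff_one, ha.ne]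

theorem coeff_one_X_pow_sub_one (ha : 1 < a) : ((X : R[X]) ^ a - 1).coeff 1 = 0 := by
  simp [coeff_X_pow, coeff_one, ha.ne]

theorem coeff_zero_and_one_of_mul_eq {Δ : R[X]} {b c : ℕ} (ha : 1 < a) (hb : 1 < b)
    (hc : 1 < c) (h : Δ * ((X ^ a - 1) * (X ^ b - 1)) = (X ^ c - 1) * (X - 1)) :
    Δ.coeff 0 = 1 ∧ Δ.coeff 1 = -1 := by
  have h0 := congrArg (coeff · 0) h
  have h1 := congrArg (coeff · 1) h
  simp only [mul_coeff_zero, coeff_one_mul, coeff_zero_X_pow_sub_one (by omega : 0 < a),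
    coeff_zero_X_pow_sub_one (by omega : 0 < b), coeff_zero_X_pow_sub_one (by omega : 0 < c),
    coeff_one_X_pow_sub_one ha, coeff_one_X_pow_sub_one hb, coeff_one_X_pow_sub_one hc,
    coeff_sub, coeff_X_zero, coeff_X_one, coeff_one] at h0 h1
  have hΔ0 : Δ.coeff 0 = 1 := by simpa using h0
  refine ⟨hΔ0, ?_⟩
  simpa [hΔ0] using h1

end

end Polynomial

theorem torus_knot_sum_count_general (m n : ℕ)
    (p q : Fin m → ℕ) (p' q' : Fin n → ℕ)
    (hp : ∀ i, 1 < p i) (hpq : ∀ i, p i < q i)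
    (hp' : ∀ j, 1 < p' j) (hpq' : ∀ j, p' j < q' j)
    (Δ : Fin m → ℤ[X]) (Δ' : Fin n → ℤ[X])
    (hΔ : ∀ i, Δ i * ((X ^ p i - 1) * (X ^ q i - 1)) = (X ^ (p i * q i) - 1) * (X - 1))
    (hΔ' : ∀ j, Δ' j * ((X ^ p' j - 1) * (X ^ q' j - 1)) = (X ^ (p' j * q' j) - 1) * (X - 1))
    (P : ℤ[X]) (hP0 : P.coeff 0 = 1) (hP1 : P.coeff 1 = -1)
    (heq : ∏ i, Δ i = P * ∏ j, Δ' j) :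
    m = n + 1 := by
  have hd i := coeff_zero_and_one_of_mul_eq (hp i) (by grind) (by nlinarith [hp i, hpq i]) (hΔ i)
  have hd' j :=
    coeff_zero_and_one_of_mul_eq (hp' j) (by grind) (by nlinarith [hp' j, hpq' j]) (hΔ' j)
  have h1 := congrArg (coeff · 1) heq
  simp only [coeff_one_mul, coeff_zero_prod, hP0, hP1,
    coeff_one_prod_of_coeff_zero_eq_one _ _ fun i _ => (hd i).1,
    coeff_one_prod_of_coeff_zero_eq_one _ _ fun j _ => (hd' j).1, hd, hd', Finset.sum_const,
    Finset.card_univ, Fintype.card_fin, Finset.prod_const_one, nsmul_eq_mul, mul_one, one_mul] at h1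
  omega

theorem torus_knot_sum_count (m n : ℕ)
    (p q : Fin m → ℕ) (p' q' : Fin n → ℕ)
    (hp : ∀ i, 1 < p i) (hpq : ∀ i, p i < q i) (hcop : ∀ i, Nat.Coprime (p i) (q i))
    (hp' : ∀ j, 1 < p' j) (hpq' : ∀ j, p' j < q' j) (hcop' : ∀ j, Nat.Coprime (p' j) (q' j))
    (Δ : Fin m → ℤ[X]) (Δ' : Fin n → ℤ[X])
    (hΔ : ∀ i, Δ i * ((X ^ p i - 1) * (X ^ q i - 1)) = (X ^ (p i * q i) - 1) * (X - 1))
    (hΔ' : ∀ j, Δ' j * ((X ^ p' j - 1) * (X ^ q' j - 1)) = (X ^ (p' j * q' j) - 1) * (X - 1))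
    (P : ℤ[X]) (hP0 : P.coeff 0 = 1) (hP1 : P.coeff 1 = -1)
    (heq : ∏ i, Δ i = P * ∏ j, Δ' j) :
    m = n + 1 :=
  torus_knot_sum_count_general m n p q p' q' hp hpq hp' hpq' Δ Δ' hΔ hΔ' P hP0 hP1 heq
end
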